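/- The moiré potential matrix has the C₂yT symmetry: with g(x,y) = (−x, y), for every r ∈ ℝ² one has σ₁ · conj(M(r)) · σ₁ = M(g r), where conj denotes entrywise complex conjugation. In particular V₊(g r) = V₋(r), V₋(g r) = V₊(r), and t(g r) = t(r). -/
import Mathlib


open Real Complex

noncomputable section

/-- Rotation of ℝ² by angle 2π/3. -/
def rot3 (p : ℝ × ℝ) : ℝ × ℝ :=
  (-(1 / 2) * p.1 - (Real.sqrt 3 / 2) * p.2, (Real.sqrt 3 / 2) * p.1 - (1 / 2) * p.2)

/-- Dot product on ℝ². -/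
def dot2 (p q : ℝ × ℝ) : ℝ := p.1 * q.1 + p.2 * q.2

/-- The first-shell moiré reciprocal vectors b₁, b₂ = R b₁, b₃ = R b₂. -/
def bv (kθ : ℝ) : Fin 3 → ℝ × ℝ
  | 0 => (kθ, 0)
  | 1 => (-(kθ / 2), kθ * Real.sqrt 3 / 2)
  | 2 => (-(kθ / 2), -(kθ * Real.sqrt 3 / 2))

/-- The moiré scattering vectors q₁ = (k_θ/√3)(0,1), q₂ = R q₁, q₃ = R q₂. -/
def qv (kθ : ℝ) : Fin 3 → ℝ × ℝ
  | 0 => (0, kθ / Real.sqrt 3)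
  | 1 => (-(kθ / 2), -(kθ / (2 * Real.sqrt 3)))
  | 2 => (kθ / 2, -(kθ / (2 * Real.sqrt 3)))

/-- Top-layer moiré potential V₊(r) = 2V ∑ₙ cos(bₙ·r + ψ). -/
def Vtop (kθ V ψ : ℝ) (r : ℝ × ℝ) : ℝ :=
  2 * V * ∑ n : Fin 3, Real.cos (dot2 (bv kθ n) r + ψ)

/-- Bottom-layer moiré potential V₋(r) = 2V ∑ₙ cos(bₙ·r − ψ). -/
def Vbot (kθ V ψ : ℝ) (r : ℝ × ℝ) : ℝ :=
  2 * V * ∑ n : Fin 3, Real.cos (dot2 (bv kθ n) r - ψ)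

/-- Interlayer tunneling t(r) = w ∑ₙ exp(i qₙ·r). -/
def tun (kθ w : ℝ) (r : ℝ × ℝ) : ℂ :=
  (w : ℂ) * ∑ n : Fin 3, Complex.exp (Complex.I * (dot2 (qv kθ n) r : ℝ))

/-- The 2×2 moiré potential matrix M(r). -/
def Mmat (kθ V w ψ : ℝ) (r : ℝ × ℝ) : Matrix (Fin 2) (Fin 2) ℂ :=
  !![(Vtop kθ V ψ r : ℂ), tun kθ w r;
     (starRingEnd ℂ) (tun kθ w r), (Vbot kθ V ψ r : ℂ)]

/-- The Pauli matrix σ₁. -/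
def σ₁ : Matrix (Fin 2) (Fin 2) ℂ := !![0, 1; 1, 0]

end

/-- C₂yT symmetry of the moiré potential matrix: with g(x,y) = (−x,y),
σ₁ · conj(M(r)) · σ₁ = M(g r) for all r; in particular V₊(g r) = V₋(r),
V₋(g r) = V₊(r) and t(g r) = t(r). -/
theorem moire_C2yT_symmetry (kθ V w ψ : ℝ) (hkθ : 0 < kθ) :
    ∀ r : ℝ × ℝ,
      σ₁ * (Mmat kθ V w ψ r).map (starRingEnd ℂ) * σ₁ = Mmat kθ V w ψ (-r.1, r.2) ∧
      Vtop kθ V ψ (-r.1, r.2) = Vbot kθ V ψ r ∧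
      Vbot kθ V ψ (-r.1, r.2) = Vtop kθ V ψ r ∧
      tun kθ w (-r.1, r.2) = tun kθ w r := by
  intro r
  obtain ⟨x, y⟩ := r
  have hc : ∀ a b : ℝ, Real.cos (-a + b) = Real.cos (a - b) := by
    intro a b; rw [← Real.cos_neg]; ring_nf
  have htop : Vtop kθ V ψ (-x, y) = Vbot kθ V ψ (x, y) := by
    simp only [Vtop, Vbot, dot2, bv, Fin.sum_univ_three]
    have h1 : kθ * -x + 0 * y + ψ = -(kθ * x + 0 * y - ψ) := by ring
    have h2 : -(kθ / 2) * -x + kθ * Real.sqrt 3 / 2 * y + ψ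
        = -(-(kθ / 2) * x + -(kθ * Real.sqrt 3 / 2) * y - ψ) := by ring
    have h3 : -(kθ / 2) * -x + -(kθ * Real.sqrt 3 / 2) * y + ψ
        = -(-(kθ / 2) * x + kθ * Real.sqrt 3 / 2 * y - ψ) := by ring
    rw [h1, h2, h3, Real.cos_neg, Real.cos_neg, Real.cos_neg]
    ring
  have hbot : Vbot kθ V ψ (-x, y) = Vtop kθ V ψ (x, y) := by
    simp only [Vtop, Vbot, dot2, bv, Fin.sum_univ_three]
    have h1 : kθ * -x + 0 * y - ψ = -(kθ * x + 0 * y + ψ) := by ring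
    have h2 : -(kθ / 2) * -x + kθ * Real.sqrt 3 / 2 * y - ψ
        = -(-(kθ / 2) * x + -(kθ * Real.sqrt 3 / 2) * y + ψ) := by ring
    have h3 : -(kθ / 2) * -x + -(kθ * Real.sqrt 3 / 2) * y - ψ
        = -(-(kθ / 2) * x + kθ * Real.sqrt 3 / 2 * y + ψ) := by ring
    rw [h1, h2, h3, Real.cos_neg, Real.cos_neg, Real.cos_neg]
    ring
  have htun : tun kθ w (-x, y) = tun kθ w (x, y) := by
    simp only [tun, dot2, qv, Fin.sum_univ_three]
    have h1 : (0 : ℝ) * -x + kθ / Real.sqrt 3 * y = 0 * x + kθ / Real.sqrt 3 * y := by ring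
    have h2 : -(kθ / 2) * -x + -(kθ / (2 * Real.sqrt 3)) * y
        = kθ / 2 * x + -(kθ / (2 * Real.sqrt 3)) * y := by ring
    have h3 : kθ / 2 * -x + -(kθ / (2 * Real.sqrt 3)) * y
        = -(kθ / 2) * x + -(kθ / (2 * Real.sqrt 3)) * y := by ring
    rw [h1, h2, h3]
    ring
  refine ⟨?_, htop, hbot, htun⟩
  ext i j
  fin_cases i <;> fin_cases j <;>
    simp [Mmat, σ₁, Matrix.mul_apply, Matrix.vecMul, dotProduct,
      Matrix.map_apply, Fin.sum_univ_two, htop, hbot, htun, Complex.conj_ofReal]
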